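/- For any finite graph G and any edge e = {u,v} of G, Z(G) = Z(G − e) − Z(G \ N[e]), where G − e is G with the edge e removed and N[e] = N[u] ∪ N[v]. -/

import Mathlib

/-!
Expanding `χ(Ind G)` face by face gives `Z(G) = ∑ (-1)^|I|` over all independent sets `I` of `G`,
the empty set included. The independent sets of `G - e` are those of `G` together with those
containing both `u` and `v`, and the latter are exactly the sets `{u, v} ∪ J` with `J` independent
in `G \ N[e]`, which carry the same sign as `J`. Hence `Z(G - e) = Z(G) + Z(G \ N[e])`.
-/

open scoped Classical

noncomputable section

/-- The (unreduced) Euler characteristic of the independence complex `Ind(G)`. -/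
def eulerCharInd {V : Type*} [Fintype V] (G : SimpleGraph V) : ℤ :=
  ∑ s ∈ Finset.univ.filter
      (fun s : Finset V => s.Nonempty ∧ ∀ u ∈ s, ∀ w ∈ s, ¬ G.Adj u w),
    (-1 : ℤ) ^ (s.card - 1)

/-- The Witten index `Z(G) = 1 - χ(Ind(G))`. -/
def wittenInd {V : Type*} [Fintype V] (G : SimpleGraph V) : ℤ := 1 - eulerCharInd G

open Finset

namespace SimpleGraph

variable {V : Type*} (G : SimpleGraph V) {u v : V}

lemma isIndepSet_deleteEdges_and_not_iff (h : G.Adj u v) {s : Set V} :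
    (G.deleteEdges {s(u, v)}).IsIndepSet s ∧ ¬(u ∈ s ∧ v ∈ s) ↔ G.IsIndepSet s := by
  constructor
  · rintro ⟨hs, huv⟩ x hx y hy hne hxy
    have : s(x, y) = s(u, v) := by
      by_contra hxy'
      exact hs hx hy hne ((deleteEdges_adj ..).2 ⟨hxy, hxy'⟩)
    rcases Sym2.eq_iff.1 this with ⟨rfl, rfl⟩ | ⟨rfl, rfl⟩
    exacts [huv ⟨hx, hy⟩, huv ⟨hy, hx⟩]
  · intro hs
    exact ⟨hs.mono' fun x y hxy hD => hxy (deleteEdges_le _ hD), fun ⟨hu, hv⟩ => hs hu hv h.ne h⟩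

lemma isIndepSet_deleteEdges_insert_insert_iff {t : Set V} (hu : u ∉ t) (hv : v ∉ t) :
    (G.deleteEdges {s(u, v)}).IsIndepSet (insert u (insert v t)) ↔
      G.IsIndepSet t ∧ t ⊆ (G.neighborSet u ∪ G.neighborSet v)ᶜ := by
  have hD : ∀ x ∈ t, ∀ y, ((G.deleteEdges {s(u, v)}).Adj y x ↔ G.Adj y x) := by
    intro x hx y
    simp only [deleteEdges_adj, Set.mem_singleton_iff, Sym2.eq_iff, and_iff_left_iff_imp]
    rintro - (⟨-, rfl⟩ | ⟨-, rfl⟩) <;> contradiction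
  have hDuv : ¬(G.deleteEdges {s(u, v)}).Adj u v := by simp
  simp only [IsIndepSet, Set.pairwise_insert, Set.mem_insert_iff, Set.subset_def,
    Set.mem_compl_iff, Set.mem_union, mem_neighborSet, forall_eq_or_imp]
  grind [Set.Pairwise, adj_comm]

lemma isIndepSet_induce_iff_map {W : Set V} {s : Finset W} :
    (G.induce W).IsIndepSet ↑s ↔ G.IsIndepSet ↑(s.map (Function.Embedding.subtype _)) := by
  rw [coe_map, Function.Embedding.coe_subtype]
  exact (Subtype.val_injective.injOn.pairwise_image (r := fun x y => ¬G.Adj x y)).symm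

lemma subset_compl_neighborSets_union_iff {t : Set V} :
    t ⊆ (G.neighborSet u ∪ {u} ∪ G.neighborSet v ∪ {v})ᶜ ↔
      u ∉ t ∧ v ∉ t ∧ t ⊆ (G.neighborSet u ∪ G.neighborSet v)ᶜ := by
  simp only [Set.subset_def, Set.mem_compl_iff, Set.mem_union, Set.mem_singleton_iff]
  grind

variable [Fintype V]

def indepSetSignedCount : ℤ :=
  ∑ s ∈ univ.filter fun s : Finset V => G.IsIndepSet ↑s, (-1) ^ #s

theorem wittenInd_eq_indepSetSignedCount : wittenInd G = G.indepSetSignedCount := by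
  have hfilter : (univ.filter fun s : Finset V => G.IsIndepSet ↑s) =
      insert ∅ (univ.filter fun s : Finset V => s.Nonempty ∧ ∀ u ∈ s, ∀ w ∈ s, ¬G.Adj u w) := by
    ext s
    rcases s.eq_empty_or_nonempty with rfl | hs
    · simp
    · simp only [IsIndepSet, Set.Pairwise, mem_coe, mem_filter, mem_univ, true_and,
        mem_insert, hs.ne_empty, hs, false_or]
      exact ⟨fun h x hx y hy hxy => h hx hy hxy.ne hxy, fun h x hx y hy _ => h x hx y hy⟩
  have hsign : ∀ s : Finset V, s.Nonempty → (-1 : ℤ) ^ #s = -(-1) ^ (#s - 1) := by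
    intro s hs
    obtain ⟨n, hn⟩ := Nat.exists_eq_succ_of_ne_zero hs.card_pos.ne'
    rw [hn, pow_succ, Nat.succ_sub_one]
    ring
  rw [wittenInd, eulerCharInd, indepSetSignedCount, hfilter, sum_insert (by simp), card_empty,
    pow_zero, sum_congr rfl fun s hs => hsign s (mem_filter.1 hs).2.1, sum_neg_distrib,
    sub_eq_add_neg]

theorem indepSetSignedCount_induce (W : Set V) [Fintype W] :
    (G.induce W).indepSetSignedCount =
      ∑ s ∈ univ.filter fun s : Finset V => G.IsIndepSet ↑s ∧ ↑s ⊆ W, (-1) ^ #s := by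
  refine sum_nbij (fun s => s.map (Function.Embedding.subtype _)) ?_
    (Finset.map_injective _).injOn ?_ fun s _ => by rw [card_map]
  · intro s hs
    simp only [mem_filter, mem_univ, true_and] at hs ⊢
    refine ⟨(G.isIndepSet_induce_iff_map).1 hs, ?_⟩
    rw [coe_map, Function.Embedding.coe_subtype]
    exact Subtype.coe_image_subset W _
  · intro t ht
    simp only [coe_filter, mem_univ, true_and, Set.mem_ofPred_eq] at ht
    have hmap := subtype_map_of_mem (p := (· ∈ W)) ht.2
    refine ⟨t.subtype (· ∈ W), ?_, hmap⟩
    simp only [coe_filter, mem_univ, true_and, Set.mem_ofPred_eq]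
    rw [isIndepSet_induce_iff_map, hmap]
    exact ht.1

theorem sum_isIndepSet_deleteEdges_containing_eq (huv : u ≠ v) :
    ∑ s ∈ univ.filter fun s : Finset V =>
        (G.deleteEdges {s(u, v)}).IsIndepSet ↑s ∧ u ∈ s ∧ v ∈ s, (-1 : ℤ) ^ #s =
      ∑ t ∈ univ.filter fun t : Finset V =>
        G.IsIndepSet ↑t ∧ ↑t ⊆ (G.neighborSet u ∪ {u} ∪ G.neighborSet v ∪ {v})ᶜ, (-1) ^ #t := by
  have hrebuild : ∀ s : Finset V, u ∈ s → v ∈ s → insert u (insert v ((s.erase u).erase v)) = s :=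
    fun s hu hv => by rw [insert_erase (mem_erase.2 ⟨huv.symm, hv⟩), insert_erase hu]
  have hsign : ∀ t : Finset V, u ∉ t → v ∉ t → (-1 : ℤ) ^ #(insert u (insert v t)) = (-1) ^ #t :=
    fun t hu hv => by
      rw [card_insert_of_notMem (by simp [huv, hu]), card_insert_of_notMem hv]
      ring
  refine sum_nbij' (fun s => (s.erase u).erase v) (fun t => insert u (insert v t))
    ?_ ?_ ?_ ?_ ?_
  · intro s hs
    simp only [mem_filter, mem_univ, true_and] at hs ⊢
    obtain ⟨hD, hu, hv⟩ := hs
    rw [← hrebuild s hu hv, coe_insert, coe_insert,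
      isIndepSet_deleteEdges_insert_insert_iff G (by simp) (by simp)] at hD
    rw [subset_compl_neighborSets_union_iff]
    exact ⟨hD.1, by simp, by simp, hD.2⟩
  · intro t ht
    simp only [mem_filter, mem_univ, true_and] at ht ⊢
    obtain ⟨hu, hv, hN⟩ := (subset_compl_neighborSets_union_iff G).1 ht.2
    rw [coe_insert, coe_insert, isIndepSet_deleteEdges_insert_insert_iff G hu hv]
    exact ⟨⟨ht.1, hN⟩, by simp, by simp⟩
  · intro s hs
    simp only [mem_filter, mem_univ, true_and] at hs
    exact hrebuild s hs.2.1 hs.2.2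
  · intro t ht
    simp only [mem_filter, mem_univ, true_and] at ht
    obtain ⟨hu, hv, -⟩ := (subset_compl_neighborSets_union_iff G).1 ht.2
    rw [erase_insert (by simpa [huv] using hu), erase_insert (by simpa using hv)]
  · intro s hs
    simp only [mem_filter, mem_univ, true_and] at hs
    conv_lhs => rw [← hrebuild s hs.2.1 hs.2.2]
    exact hsign _ (by simp) (by simp)

theorem indepSetSignedCount_deleteEdges (h : G.Adj u v) :
    (G.deleteEdges {s(u, v)}).indepSetSignedCount = G.indepSetSignedCount +
      (G.induce (G.neighborSet u ∪ {u} ∪ G.neighborSet v ∪ {v})ᶜ).indepSetSignedCount := by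
  rw [indepSetSignedCount, ← sum_filter_add_sum_filter_not _ (fun s => u ∈ s ∧ v ∈ s), add_comm,
    indepSetSignedCount_induce, filter_filter, filter_filter]
  congr 1
  · refine sum_congr (Finset.ext fun s => ?_) fun _ _ => rfl
    simp only [mem_filter, mem_univ, true_and]
    simpa only [mem_coe] using isIndepSet_deleteEdges_and_not_iff G h (s := ↑s)
  · -- the two sides carry different `Decidable` instances for the adjacency of `G - e`
    convert sum_isIndepSet_deleteEdges_containing_eq G h.ne using 3

end SimpleGraph

theorem stmt_1 {V : Type*} [Fintype V] (G : SimpleGraph V) (u v : V) (h : G.Adj u v) :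
    wittenInd G =
      wittenInd (G.deleteEdges {s(u, v)}) -
        wittenInd (G.induce ((G.neighborSet u ∪ {u} ∪ G.neighborSet v ∪ {v})ᶜ)) := by
  simp only [SimpleGraph.wittenInd_eq_indepSetSignedCount,
    SimpleGraph.indepSetSignedCount_deleteEdges G h, add_sub_cancel_right]
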